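/- In the revealed-priorities model, with equilibrium cutoffs r_a(γ,γ) = q/(1-γp) and r_b(γ,γ) = q(2-3γp)/(1-γp)², the partial derivatives at a symmetric point γ_a = γ_b = γ* satisfy: ∂(r_a + r_b)/∂γ_a = qp(1-2γ*p)/(1-γ*p)³ > 0, ∂r_b/∂γ_a = -qγ*p²/(1-γ*p)³ < 0, and ∂r_b/∂γ_b = qp(1-2γ*p)/(1-γ*p)³ > 0, provided γ*p < 1/2 and q, p, γ* > 0. -/

import Mathlib

/-- Cutoff of school A for the two-group model. -/
noncomputable def ra (q p γa γb : ℝ) : ℝ := q / (1 - γa * p)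

/-- Cutoff of school B for the two-group model. -/
noncomputable def rb (q p γa γb : ℝ) : ℝ :=
  q * (2 - 2 * γa * p - γb * p) / ((1 - γa * p) * (1 - γb * p))

/-- signs of the partial derivatives of the cutoffs at a symmetric point. -/
theorem stmt_14 (q p γs : ℝ) (hq0 : 0 < q) (hq : q ≤ 1 / 3) (hp0 : 0 < p)
    (hp : p ≤ 1 / 2) (hγ0 : 0 < γs) (hγ1 : γs ≤ 1) (hcond : γs * p < 1 / 2) :
    (HasDerivAt (fun x => ra q p x γs + rb q p x γs)
        (q * p * (1 - 2 * γs * p) / (1 - γs * p) ^ 3) γs ∧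
      0 < q * p * (1 - 2 * γs * p) / (1 - γs * p) ^ 3) ∧
    (HasDerivAt (fun x => rb q p x γs)
        (-(q * γs * p ^ 2) / (1 - γs * p) ^ 3) γs ∧
      -(q * γs * p ^ 2) / (1 - γs * p) ^ 3 < 0) ∧
    (HasDerivAt (fun y => rb q p γs y)
        (q * p * (1 - 2 * γs * p) / (1 - γs * p) ^ 3) γs ∧
      0 < q * p * (1 - 2 * γs * p) / (1 - γs * p) ^ 3) := by
  have hd0 : (0:ℝ) < 1 - γs * p := by linarith
  have hd : (1 - γs * p) ≠ 0 := ne_of_gt hd0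
  have hnum : (0:ℝ) < 1 - 2 * γs * p := by linarith
  have hcube : (0:ℝ) < (1 - γs * p) ^ 3 := by positivity
  -- basic derivative
  have hden : HasDerivAt (fun x : ℝ => 1 - x * p) (-p) γs := by
    simpa using ((hasDerivAt_id γs).mul_const p).const_sub 1
  -- ra in x
  have hra : HasDerivAt (fun x => ra q p x γs) (q * p / (1 - γs * p) ^ 2) γs := by
    have := (hasDerivAt_const γs q).div hden hd
    refine this.congr_deriv ?_
    field_simp
    ring
  -- rb in x
  have hrb1 : HasDerivAt (fun x => rb q p x γs)
      (-(q * γs * p ^ 2) / (1 - γs * p) ^ 3) γs := by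
    have hn : HasDerivAt (fun x : ℝ => q * (2 - 2 * x * p - γs * p)) (q * (-(2 * p))) γs := by
      have : HasDerivAt (fun x : ℝ => 2 - 2 * x * p - γs * p) (-(2 * p)) γs := by
        simpa using ((((hasDerivAt_id γs).const_mul 2).mul_const p).const_sub 2).sub_const
          (γs * p)
      simpa using this.const_mul q
    have hdd : HasDerivAt (fun x : ℝ => (1 - x * p) * (1 - γs * p))
        (-p * (1 - γs * p)) γs := hden.mul_const _
    have hdd0 : (1 - γs * p) * (1 - γs * p) ≠ 0 := by positivity
    have := hn.div hdd hdd0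
    refine this.congr_deriv ?_
    field_simp
    ring
  -- rb in y
  have hrb2 : HasDerivAt (fun y => rb q p γs y)
      (q * p * (1 - 2 * γs * p) / (1 - γs * p) ^ 3) γs := by
    have hn : HasDerivAt (fun y : ℝ => q * (2 - 2 * γs * p - y * p)) (q * (-p)) γs := by
      have : HasDerivAt (fun y : ℝ => 2 - 2 * γs * p - y * p) (-p) γs := by
        simpa using ((hasDerivAt_id γs).mul_const p).const_sub (2 - 2 * γs * p)
      simpa using this.const_mul q
    have hdd : HasDerivAt (fun y : ℝ => (1 - γs * p) * (1 - y * p))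
        ((1 - γs * p) * (-p)) γs := hden.const_mul _
    have hdd0 : (1 - γs * p) * (1 - γs * p) ≠ 0 := by positivity
    have := hn.div hdd hdd0
    refine this.congr_deriv ?_
    field_simp
    ring
  have hpos : 0 < q * p * (1 - 2 * γs * p) / (1 - γs * p) ^ 3 := by positivity
  refine ⟨⟨?_, hpos⟩, ⟨hrb1, ?_⟩, hrb2, hpos⟩
  · have := hra.add hrb1
    refine this.congr_deriv ?_
    field_simp
    ring
  · apply div_neg_of_neg_of_pos _ hcube
    have : 0 < q * γs * p ^ 2 := by positivity
    linarith
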